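/- For every interval graph G, there exists an interval representation R of G_γ with ν(R) = ν(G_γ) such that the restriction of R to the vertices of G is an interval representation of G with nesting exactly ν(G). -/

import Mathlib

open Set

/-- An interval representation of a simple graph `G`: each vertex `v` gets a nonempty
closed interval `[l v, r v] ⊆ ℝ`, and two distinct vertices are adjacent iff their
intervals intersect. -/
structure IntervalRep {V : Type*} (G : SimpleGraph V) where
  l : V → ℝ
  r : V → ℝ
  le : ∀ v, l v ≤ r v
  adj_iff : ∀ u v : V, u ≠ v →
    (G.Adj u v ↔ (Icc (l u) (r u) ∩ Icc (l v) (r v)).Nonempty)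

namespace IntervalRep

variable {V : Type*} {G : SimpleGraph V}

/-- The interval of a vertex. -/
def itv (R : IntervalRep G) (v : V) : Set ℝ := Icc (R.l v) (R.r v)

/-- The nesting `ν(R)`: the maximum length of a chain of strictly nested vertex intervals. -/
noncomputable def nesting (R : IntervalRep G) : ℕ :=
  sSup {k : ℕ | ∃ f : Fin k → V, ∀ i j : Fin k, i < j → R.itv (f i) ⊂ R.itv (f j)}

/-- `ν_R(x)`: the maximum length of a chain of strictly nested vertex intervals whose
outermost interval is `I(x)` (counting `x` itself). -/
noncomputable def nuAt (R : IntervalRep G) (x : V) : ℕ :=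
  sSup {k : ℕ | ∃ f : Fin k → V,
    (∀ i j : Fin k, i < j → R.itv (f i) ⊂ R.itv (f j)) ∧
    ∃ h : 0 < k, f ⟨k - 1, by omega⟩ = x}

end IntervalRep

/-- A graph is an interval graph if it admits an interval representation. -/
def IsIntervalGraph {V : Type*} (G : SimpleGraph V) : Prop := Nonempty (IntervalRep G)

/-- The nesting number `ν(G)`: the minimum nesting over all interval representations. -/
noncomputable def nu {V : Type*} (G : SimpleGraph V) : ℕ :=
  sInf {n : ℕ | ∃ R : IntervalRep G, R.nesting = n}

/-- `G_α`: add vertices `u, a₁, a₂, b₁, b₂` (coded as `0,1,2,3,4`), with `u` adjacent to all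
of `G` and to `a₁, b₁`; `a₁ ~ a₂` and `b₁ ~ b₂`. -/
def Galpha {V : Type*} (G : SimpleGraph V) : SimpleGraph (V ⊕ Fin 5) :=
  SimpleGraph.fromRel fun x y =>
    match x, y with
    | Sum.inl a, Sum.inl b => G.Adj a b
    | Sum.inl _, Sum.inr i => i = 0
    | Sum.inr _, Sum.inl _ => False
    | Sum.inr i, Sum.inr j =>
        i = 0 ∧ j = 1 ∨ i = 1 ∧ j = 2 ∨ i = 0 ∧ j = 3 ∨ i = 3 ∧ j = 4

/-- `G_β`: add vertices `u, a₁, a₂` (coded as `0,1,2`), with `u` adjacent to all of `G`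
and to `a₁`; `a₁ ~ a₂`. -/
def Gbeta {V : Type*} (G : SimpleGraph V) : SimpleGraph (V ⊕ Fin 3) :=
  SimpleGraph.fromRel fun x y =>
    match x, y with
    | Sum.inl a, Sum.inl b => G.Adj a b
    | Sum.inl _, Sum.inr i => i = 0
    | Sum.inr _, Sum.inl _ => False
    | Sum.inr i, Sum.inr j => i = 0 ∧ j = 1 ∨ i = 1 ∧ j = 2

/-- `G_γ`: add vertices `u, v, a₁, a₂, b₁, b₂` (coded as `0,1,2,3,4,5`), with `u ~ v`, both
adjacent to all of `G`; `u ~ a₁`, `a₁ ~ a₂`, `v ~ b₁`, `b₁ ~ b₂`. -/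
def Ggamma {V : Type*} (G : SimpleGraph V) : SimpleGraph (V ⊕ Fin 6) :=
  SimpleGraph.fromRel fun x y =>
    match x, y with
    | Sum.inl a, Sum.inl b => G.Adj a b
    | Sum.inl _, Sum.inr i => i = 0 ∨ i = 1
    | Sum.inr _, Sum.inl _ => False
    | Sum.inr i, Sum.inr j =>
        i = 0 ∧ j = 1 ∨ i = 0 ∧ j = 2 ∨ i = 2 ∧ j = 3 ∨ i = 1 ∧ j = 4 ∨ i = 4 ∧ j = 5

/-- The disjoint union of a family of graphs, on the sigma type of their vertex sets. -/
def sigmaGraph {p : ℕ} {V : Fin p → Type*} (G : ∀ i, SimpleGraph (V i)) :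
    SimpleGraph (Σ i, V i) :=
  SimpleGraph.fromRel fun x y => ∃ h : x.1 = y.1, (G y.1).Adj (h ▸ x.2) y.2

/-- The graph obtained from `H` by adding one new vertex adjacent to every vertex of `H`. -/
def joinVertex {W : Type*} (H : SimpleGraph W) : SimpleGraph (W ⊕ Unit) :=
  SimpleGraph.fromRel fun x y =>
    match x, y with
    | Sum.inl a, Sum.inl b => H.Adj a b
    | Sum.inl _, Sum.inr _ => True
    | _, _ => False

/-!
Restricting a representation of `G_γ` to the vertices of `G` cannot increase its nesting, so
`ν(G) ≤ ν(G_γ)`. Conversely, an optimal representation of `G` inside `[m, M]` extends to `G_γ` by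
laying `u` and `v` over `[m, M]` and the two pendant paths outside it. None of the six new
intervals lies strictly inside another interval, so only the outermost member of a chain can be
new, and `ν(G_γ) ≤ ν(G) + 1`. Now either an optimal representation of `G_γ` restricts to one of
nesting `ν(G)`, or `ν(G_γ) = ν(G) + 1` and the extension is itself optimal.
-/

namespace IntervalRep

variable {V W : Type*} {G : SimpleGraph V} {H : SimpleGraph W}

def chainSet (R : IntervalRep G) : Set ℕ :=
  {k | ∃ f : Fin k → V, StrictMono (R.itv ∘ f)}

theorem le_card_of_mem_chainSet [Finite V] (R : IntervalRep G) {k : ℕ}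
    (hk : k ∈ R.chainSet) : k ≤ Nat.card V := by
  obtain ⟨f, hf⟩ := hk
  simpa using Nat.card_le_card_of_injective f hf.injective.of_comp

theorem le_nesting [Finite V] (R : IntervalRep G) {k : ℕ} (hk : k ∈ R.chainSet) :
    k ≤ R.nesting :=
  le_csSup ⟨Nat.card V, fun _ => R.le_card_of_mem_chainSet⟩ hk

theorem nesting_le (R : IntervalRep G) {n : ℕ} (h : ∀ k ∈ R.chainSet, k ≤ n) :
    R.nesting ≤ n :=
  csSup_le' h

def comap (R : IntervalRep H) (f : G ↪g H) : IntervalRep G where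
  l := R.l ∘ f
  r := R.r ∘ f
  le v := R.le (f v)
  adj_iff a b hab := by
    rw [← f.map_adj_iff]
    exact R.adj_iff _ _ (f.injective.ne hab)

theorem nesting_comap_le [Finite W] (R : IntervalRep H) (f : G ↪g H) :
    (R.comap f).nesting ≤ R.nesting :=
  nesting_le _ fun _ ⟨g, hg⟩ => R.le_nesting ⟨f ∘ g, hg⟩

theorem nesting_le_nesting_comap_add_one [Finite V] (R : IntervalRep H) (f : G ↪g H)
    (h : ∀ x ∉ range f, ∀ y, ¬ R.itv x ⊂ R.itv y) :
    R.nesting ≤ (R.comap f).nesting + 1 := by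
  refine nesting_le _ fun k ⟨g, hg⟩ => ?_
  cases k with
  | zero => omega
  | succ k =>
    have hrange (i : Fin k) : g i.castSucc ∈ range f := by
      by_contra hi
      exact h _ hi _ (hg (Fin.castSucc_lt_last i))
    choose p hp using hrange
    have hp_mono : StrictMono ((R.comap f).itv ∘ p) := fun i j hij => by
      simpa [Function.comp, itv, comap, ← hp] using hg (Fin.castSucc_lt_castSucc_iff.2 hij)
    simpa using (R.comap f).le_nesting ⟨p, hp_mono⟩

theorem exists_bounds [Finite V] (R : IntervalRep G) :
    ∃ m M : ℝ, m ≤ M ∧ (∀ v, m ≤ R.l v) ∧ ∀ v, R.r v ≤ M := by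
  obtain ⟨m, hm⟩ := (finite_range R.l).bddBelow
  obtain ⟨M, hM⟩ := (finite_range R.r).bddAbove
  exact ⟨min m M, M, min_le_right m M, fun v => (min_le_left m M).trans (hm ⟨v, rfl⟩),
    fun v => hM ⟨v, rfl⟩⟩

end IntervalRep

theorem nu_le_nesting {V : Type*} {G : SimpleGraph V} (R : IntervalRep G) : nu G ≤ R.nesting :=
  Nat.sInf_le ⟨R, rfl⟩

theorem IsIntervalGraph.exists_nesting_eq_nu {V : Type*} {G : SimpleGraph V}
    (hG : IsIntervalGraph G) : ∃ R : IntervalRep G, R.nesting = nu G := by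
  obtain ⟨R⟩ := hG
  exact Nat.sInf_mem (s := {n | ∃ R : IntervalRep G, R.nesting = n}) ⟨_, R, rfl⟩

theorem Icc_inter_Icc_nonempty_iff {a b c d : ℝ} (hab : a ≤ b) (hcd : c ≤ d) :
    (Icc a b ∩ Icc c d).Nonempty ↔ c ≤ b ∧ a ≤ d := by
  rw [Icc_inter_Icc, nonempty_Icc]
  simp only [sup_le_iff, le_inf_iff]
  tauto

namespace Ggamma

variable {V : Type*} {G : SimpleGraph V}

@[simp]
theorem adj_inl_inl {a b : V} : (Ggamma G).Adj (.inl a) (.inl b) ↔ G.Adj a b := by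
  simp only [Ggamma, SimpleGraph.fromRel_adj, ne_eq, Sum.inl.injEq]
  exact ⟨fun h => h.2.elim id SimpleGraph.Adj.symm, fun h => ⟨h.ne, .inl h⟩⟩

@[simp]
theorem adj_inl_inr {a : V} {i : Fin 6} :
    (Ggamma G).Adj (.inl a) (.inr i) ↔ i = 0 ∨ i = 1 := by
  simp [Ggamma]

variable (G) in
def inl : G ↪g Ggamma G where
  toFun := Sum.inl
  inj' := Sum.inl_injective
  map_rel_iff' := adj_inl_inl

end Ggamma

/-- The intervals of `u, v, a₁, a₂, b₁, b₂` when `G` is represented inside `[m, M]`. -/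
def ggammaLeft (m M : ℝ) : Fin 6 → ℝ := ![m - 2, m - 1, m - 4, m - 5, M + 2, M + 3]

def ggammaRight (m M : ℝ) : Fin 6 → ℝ := ![M + 1, M + 2, m - 2, m - 3, M + 4, M + 5]

theorem ggammaLeft_le_ggammaRight {m M : ℝ} (hmM : m ≤ M) (i : Fin 6) :
    ggammaLeft m M i ≤ ggammaRight m M i := by
  fin_cases i <;> simp [ggammaLeft, ggammaRight] <;> linarith

theorem Icc_inter_Icc_ggamma_nonempty_iff {m M a b : ℝ} (hma : m ≤ a) (hab : a ≤ b)
    (hbM : b ≤ M) (i : Fin 6) :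
    (Icc a b ∩ Icc (ggammaLeft m M i) (ggammaRight m M i)).Nonempty ↔ i = 0 ∨ i = 1 := by
  rw [Icc_inter_Icc_nonempty_iff hab (ggammaLeft_le_ggammaRight (by linarith) i)]
  fin_cases i <;> simp [ggammaLeft, ggammaRight] <;>
    first | (constructor <;> linarith) | (intro; linarith)

theorem Icc_ggamma_inter_Icc_ggamma_nonempty_iff_adj {V : Type*} (G : SimpleGraph V) {m M : ℝ}
    (hmM : m ≤ M) {i j : Fin 6} (hij : i ≠ j) :
    (Icc (ggammaLeft m M i) (ggammaRight m M i) ∩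
        Icc (ggammaLeft m M j) (ggammaRight m M j)).Nonempty ↔
      (Ggamma G).Adj (.inr i) (.inr j) := by
  rw [Icc_inter_Icc_nonempty_iff (ggammaLeft_le_ggammaRight hmM i)
    (ggammaLeft_le_ggammaRight hmM j)]
  fin_cases i <;> fin_cases j <;> simp [Ggamma, ggammaLeft, ggammaRight] at hij ⊢ <;>
    first | (constructor <;> linarith) | (intro; linarith) | linarith

namespace IntervalRep

variable {V : Type*} {G : SimpleGraph V} (R : IntervalRep G) {m M : ℝ} (hmM : m ≤ M)
  (hl : ∀ v, m ≤ R.l v) (hr : ∀ v, R.r v ≤ M)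

def extendGgamma : IntervalRep (Ggamma G) where
  l := Sum.elim R.l (ggammaLeft m M)
  r := Sum.elim R.r (ggammaRight m M)
  le
    | .inl v => R.le v
    | .inr i => ggammaLeft_le_ggammaRight hmM i
  adj_iff
    | .inl a, .inl b, hab => by
      simpa using R.adj_iff a b (by simpa using hab)
    | .inl a, .inr j, _ => by
      simpa using (Icc_inter_Icc_ggamma_nonempty_iff (hl a) (R.le a) (hr a) j).symm
    | .inr i, .inl b, _ => by
      rw [SimpleGraph.adj_comm, inter_comm]
      simpa using (Icc_inter_Icc_ggamma_nonempty_iff (hl b) (R.le b) (hr b) i).symm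
    | .inr i, .inr j, hij =>
      (Icc_ggamma_inter_Icc_ggamma_nonempty_iff_adj G hmM (by simpa using hij)).symm

theorem comap_extendGgamma : (R.extendGgamma hmM hl hr).comap (Ggamma.inl G) = R := rfl

theorem not_itv_extendGgamma_inr_ssubset (i : Fin 6) (y : V ⊕ Fin 6) :
    ¬ (R.extendGgamma hmM hl hr).itv (.inr i) ⊂ (R.extendGgamma hmM hl hr).itv y := by
  intro h
  have hsub := (Icc_subset_Icc_iff (ggammaLeft_le_ggammaRight hmM i)).1 h.subset
  rcases y with v | j
  · have := hl v; have := hr v; have := R.le v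
    fin_cases i <;> simp [extendGgamma, ggammaLeft, ggammaRight] at hsub <;> linarith
  · have hne := h.ne
    fin_cases i <;> fin_cases j <;>
      simp [itv, extendGgamma, ggammaLeft, ggammaRight] at hsub hne <;> linarith

theorem nesting_extendGgamma_le [Finite V] :
    (R.extendGgamma hmM hl hr).nesting ≤ R.nesting + 1 := by
  refine (nesting_le_nesting_comap_add_one _ (Ggamma.inl G) ?_).trans_eq
    (by rw [comap_extendGgamma])
  rintro (v | i) hx y
  · exact absurd ⟨v, rfl⟩ hx
  · exact R.not_itv_extendGgamma_inr_ssubset hmM hl hr i y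

end IntervalRep

/-- there is a representation `R` of `G_γ` with `ν(R) = ν(G_γ)` whose
restriction to the vertices of `G` is a representation of `G` of nesting exactly `ν(G)`. -/
theorem stmt_10 {V : Type*} [Fintype V] (G : SimpleGraph V) (hG : IsIntervalGraph G) :
    ∃ R : IntervalRep (Ggamma G), R.nesting = nu (Ggamma G) ∧
      ∃ R' : IntervalRep G,
        (∀ v : V, R'.l v = R.l (Sum.inl v) ∧ R'.r v = R.r (Sum.inl v)) ∧
        R'.nesting = nu G := by
  obtain ⟨R₀, hR₀⟩ := hG.exists_nesting_eq_nu
  obtain ⟨m, M, hmM, hl, hr⟩ := R₀.exists_bounds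
  set E := R₀.extendGgamma hmM hl hr
  obtain ⟨R, hR⟩ := IsIntervalGraph.exists_nesting_eq_nu ⟨E⟩
  set R' := R.comap (Ggamma.inl G)
  have hR' : nu G ≤ R'.nesting := nu_le_nesting R'
  have hR'R : R'.nesting ≤ R.nesting := R.nesting_comap_le _
  have hRE : R.nesting ≤ E.nesting := hR ▸ nu_le_nesting E
  have hE : E.nesting ≤ nu G + 1 := hR₀ ▸ R₀.nesting_extendGgamma_le hmM hl hr
  by_cases h : R'.nesting = nu G
  · exact ⟨R, hR, R', fun v => ⟨rfl, rfl⟩, h⟩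
  · exact ⟨E, by omega, R₀, fun v => ⟨rfl, rfl⟩, hR₀⟩
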